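/- Let T be a binary span tree over [1, n] with n ≥ 2, and for i ∈ [1, n−1] let M(i) be the largest span of S(T) with i as an endpoint. Then M is a bijection from {1, …, n−1} onto S(T): every internal span of T is the largest span with endpoint i for exactly one i ∈ [1, n−1]. -/
import Mathlib


/-- A full binary tree over the leaf interval `[i, j]`: a leaf covers `[i, i]`,
and an internal node covering `[i, j]` splits at point `k` (`i ≤ k < j`) into
children covering `[i, k]` and `[k+1, j]`. -/
inductive SpanTree : ℕ → ℕ → Type where
  | leaf (i : ℕ) : SpanTree i i
  | node {i k j : ℕ} (h1 : i ≤ k) (h2 : k < j)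
      (l : SpanTree i k) (r : SpanTree (k + 1) j) : SpanTree i j

/-- The set `S(T)` of (non-singleton) spans of internal nodes of the tree. -/
def SpanTree.spans : ∀ {i j : ℕ}, SpanTree i j → Set (ℕ × ℕ)
  | _, _, .leaf _ => ∅
  | i, j, .node _ _ l r => insert (i, j) (l.spans ∪ r.spans)

/-- The set of splits `(i, k, j)` of internal nodes: node covering `(i, j)`
split at point `k` into children covering `(i, k)` and `(k+1, j)`. -/
def SpanTree.splits : ∀ {a b : ℕ}, SpanTree a b → Set (ℕ × ℕ × ℕ)
  | _, _, .leaf _ => ∅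
  | _, _, @SpanTree.node i k j _ _ l r => insert (i, k, j) (l.splits ∪ r.splits)

/-- Interval inclusion: the span `s` is a (not necessarily proper) subinterval of `t`. -/
def SpanSub (s t : ℕ × ℕ) : Prop := t.1 ≤ s.1 ∧ s.2 ≤ t.2

/-- `i` is an endpoint of the span `s`. -/
def HasEndpoint (s : ℕ × ℕ) (i : ℕ) : Prop := s.1 = i ∨ s.2 = i

/-- `s` is the inclusion-largest span of `T` having `i` as an endpoint. -/
def IsLargestAt {a b : ℕ} (T : SpanTree a b) (i : ℕ) (s : ℕ × ℕ) : Prop :=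
  s ∈ T.spans ∧ HasEndpoint s i ∧ ∀ t ∈ T.spans, HasEndpoint t i → SpanSub t s

lemma spans_bounds : ∀ {a b : ℕ} (T : SpanTree a b), ∀ s ∈ T.spans,
    a ≤ s.1 ∧ s.1 < s.2 ∧ s.2 ≤ b := by
  intro a b T
  induction T with
  | leaf i => intro s hs; exact absurd hs (by simp [SpanTree.spans])
  | node h1 h2 l r ihl ihr =>
    intro s hs
    rcases hs with rfl | hs | hs
    · exact ⟨le_refl _, lt_of_le_of_lt h1 h2, le_refl _⟩
    · obtain ⟨u, v, w⟩ := ihl s hs; exact ⟨u, v, w.trans h2.le⟩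
    · obtain ⟨u, v, w⟩ := ihr s hs
      exact ⟨le_trans (by omega) u, v, w⟩

lemma spans_finite : ∀ {a b : ℕ} (T : SpanTree a b), T.spans.Finite := by
  intro a b T
  induction T with
  | leaf i => simp [SpanTree.spans]
  | node h1 h2 l r ihl ihr => exact (ihl.union ihr).insert _

lemma spans_ncard : ∀ {a b : ℕ} (T : SpanTree a b), T.spans.ncard = b - a := by
  intro a b T
  induction T with
  | leaf i => simp [SpanTree.spans]
  | node h1 h2 l r ihl ihr =>
    rename_i i k j
    have hfl := spans_finite l
    have hfr := spans_finite r
    have hdisj : Disjoint l.spans r.spans := by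
      rw [Set.disjoint_left]
      intro s hsl hsr
      have b1 := spans_bounds l s hsl
      have b2 := spans_bounds r s hsr
      omega
    have hnotin : (i, j) ∉ l.spans ∪ r.spans := by
      intro h
      rcases h with h | h
      · have := spans_bounds l _ h; simp at this; omega
      · have := spans_bounds r _ h; simp at this; omega
    show (insert (i,j) (l.spans ∪ r.spans)).ncard = j - i
    rw [Set.ncard_insert_of_notMem hnotin (hfl.union hfr),
      Set.ncard_union_eq hdisj hfl hfr, ihl, ihr]
    omega

lemma parent_lemma : ∀ {a b : ℕ} (T : SpanTree a b), ∀ s ∈ T.spans,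
    s = (a, b) ∨ ∃ t ∈ T.spans, SpanSub s t ∧ s ≠ t ∧ (t.1 = s.1 ∨ t.2 = s.2) := by
  intro a b T
  induction T with
  | leaf i => intro s hs; exact absurd hs (by simp [SpanTree.spans])
  | node h1 h2 l r ihl ihr =>
    rename_i i k j
    intro s hs
    rcases hs with rfl | hs | hs
    · exact Or.inl rfl
    · right
      rcases ihl s hs with rfl | ⟨t, ht, h3, h4, h5⟩
      · exact ⟨(i, j), Or.inl rfl, ⟨le_refl _, h2.le⟩, by simp; omega, Or.inl rfl⟩
      · exact ⟨t, Or.inr (Or.inl ht), h3, h4, h5⟩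
    · right
      rcases ihr s hs with rfl | ⟨t, ht, h3, h4, h5⟩
      · exact ⟨(i, j), Or.inl rfl, ⟨by omega, le_refl _⟩, by simp; omega, Or.inr rfl⟩
      · exact ⟨t, Or.inr (Or.inr ht), h3, h4, h5⟩

/-- The map `i ↦ M(i)` (largest span with endpoint `i`) is a bijection from
`{1, …, n-1}` onto `S(T)`. -/
theorem largest_span_bijective (n : ℕ) (hn : 2 ≤ n) (T : SpanTree 1 n)
    (M : ℕ → ℕ × ℕ) (hM : ∀ i ∈ Set.Icc 1 (n - 1), IsLargestAt T i (M i)) :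
    Set.BijOn M (Set.Icc 1 (n - 1)) T.spans := by
  have hmaps : Set.MapsTo M (Set.Icc 1 (n - 1)) T.spans := fun i hi => (hM i hi).1
  have hinj : Set.InjOn M (Set.Icc 1 (n - 1)) := by
    intro i hi j hj hij
    by_contra hne
    -- wlog i < j
    wlog hlt : i < j generalizing i j
    · exact this hj hi hij.symm (Ne.symm hne) (by omega)
    obtain ⟨hmem, hep_i, hmax_i⟩ := hM i hi
    obtain ⟨hmem', hep_j, hmax_j⟩ := hM j hj
    rw [hij] at hep_i hmax_i
    set s := M j with hs
    have hb := spans_bounds T s hmem'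
    simp only [Set.mem_Icc] at hi hj
    -- s = (i, j)
    have hs1 : s.1 = i ∧ s.2 = j := by
      rcases hep_i with h1 | h1 <;> rcases hep_j with h2 | h2 <;> omega
    -- s ≠ root since s.2 = j ≤ n - 1 < n
    rcases parent_lemma T s hmem' with hroot | ⟨t, ht, hsub, htne, hshare⟩
    · have : s.2 = n := by rw [hroot]
      omega
    · rcases hshare with h | h
      · have := hmax_i t ht (Or.inl (by omega))
        exact htne (Prod.ext (by omega) (by
          rcases hsub with ⟨u1, u2⟩; rcases this with ⟨v1, v2⟩; omega))
      · have := hmax_j t ht (Or.inr (by omega))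
        exact htne (Prod.ext (by
          rcases hsub with ⟨u1, u2⟩; rcases this with ⟨v1, v2⟩; omega) (by omega))
  refine ⟨hmaps, hinj, ?_⟩
  -- surjectivity via cardinality
  have hIcc : (Set.Icc 1 (n - 1)).ncard = n - 1 := by
    rw [← Finset.coe_Icc, Set.ncard_coe_finset, Nat.card_Icc]
    omega
  have himg : M '' Set.Icc 1 (n - 1) ⊆ T.spans := Set.image_subset_iff.2 hmaps
  have hcard : (M '' Set.Icc 1 (n - 1)).ncard = n - 1 := by
    rw [Set.ncard_image_of_injOn hinj, hIcc]
  have : M '' Set.Icc 1 (n - 1) = T.spans := by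
    apply Set.eq_of_subset_of_ncard_le himg _ (spans_finite T)
    rw [hcard, spans_ncard T]
  exact fun s hs => this ▸ hs
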